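/- Under the hypotheses of the previous homogenization lemma, with m^ε(t) := ∫₀ᵗ λ(s) F̄_s(t−s) ψ(Z_{s/ε}) ds where s ↦ λ(s) F̄_s(t−s) is continuously differentiable on [0,t], and with the quantitative ergodic bound |（1/u)∫₀ᵘ ψ(Z_r) dr − ψ̄| ≤ C/(1+u)^κ, we have lim_{ε→0} m^ε(t) = ψ̄ ∫₀ᵗ λ(s) F̄_s(t−s) ds. -/

import Mathlib

/-!
Write `φ = ψ ∘ Z - ψ̄` and `H_ε(x) = ∫₀ˣ φ(s/ε) ds = ε ∫₀^{x/ε} φ`. The ergodic rate gives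
`|H_ε(x)| ≤ C x` uniformly in `ε` and `H_ε(x) → 0` for every `x > 0`. Integrating by parts
against the absolutely continuous weight `g(s) = λ(s) F̄_s(t - s)`,
`∫₀ᵗ g(s) φ(s/ε) ds = g(t) H_ε(t) - ∫₀ᵗ g' H_ε`, and both terms vanish as `ε → 0`, the second
by dominated convergence.
-/

open MeasureTheory Filter Set Topology

theorem AbsolutelyContinuousOnInterval.integral_mul_eq_sub_integral_deriv_mul_primitive
    {g f : ℝ → ℝ} {a b : ℝ} (hg : AbsolutelyContinuousOnInterval g a b)
    (hf : IntervalIntegrable f volume a b) :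
    ∫ x in a..b, g x * f x
      = g b * (∫ x in a..b, f x) - ∫ x in a..b, deriv g x * ∫ y in a..x, f y := by
  have hF := hf.absolutelyContinuousOnInterval_intervalIntegral (c := a) left_mem_uIcc
  have hderiv : ∫ x in a..b, g x * f x
      = ∫ x in a..b, g x * deriv (fun x => ∫ y in a..x, f y) x := by
    refine intervalIntegral.integral_congr_ae ?_
    filter_upwards [hf.ae_hasDerivAt_integral] with x hx hxab
    rw [(hx (uIoc_subset_uIcc hxab) a left_mem_uIcc).deriv]
  rw [hderiv, hg.integral_mul_deriv_eq_deriv_mul hF]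
  simp

theorem MeasureTheory.LocallyIntegrable.intervalIntegrable_comp_div {φ : ℝ → ℝ}
    (hφ : LocallyIntegrable φ) {c : ℝ} (hc : c ≠ 0) (a b : ℝ) :
    IntervalIntegrable (fun x => φ (x / c)) volume a b := by
  have hφab : IntervalIntegrable φ volume (a / c) (b / c) := by
    rw [intervalIntegrable_iff]
    exact (hφ.integrableOn_isCompact isCompact_uIcc).mono_set uIoc_subset_uIcc
  simpa [div_eq_mul_inv, hc] using hφab.comp_mul_right (c := c⁻¹)

section

variable {φ : ℝ → ℝ}

theorem abs_integral_le_mul_of_abs_average_le_rpow {C κ : ℝ} (hκ : 0 ≤ κ)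
    (hrate : ∀ u > (0:ℝ), |(1 / u) * ∫ r in (0:ℝ)..u, φ r| ≤ C / (1 + u) ^ κ) :
    ∀ u ≥ 0, |∫ r in (0:ℝ)..u, φ r| ≤ C * u := by
  intro u hu
  rcases hu.eq_or_lt with rfl | hu
  · simp
  have hpow : 1 ≤ (1 + u) ^ κ := Real.one_le_rpow (by linarith) hκ
  have hC : 0 ≤ C := by
    simpa using (le_div_iff₀ (by positivity)).mp ((abs_nonneg _).trans (hrate u hu))
  have := (hrate u hu).trans (div_le_self hC hpow)
  rw [abs_mul, abs_of_pos (one_div_pos.mpr hu)] at this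
  rwa [one_div, inv_mul_le_iff₀ hu, mul_comm] at this

theorem tendsto_average_of_abs_average_le_rpow {C κ : ℝ} (hκ : 0 < κ)
    (hrate : ∀ u > (0:ℝ), |(1 / u) * ∫ r in (0:ℝ)..u, φ r| ≤ C / (1 + u) ^ κ) :
    Tendsto (fun u => u⁻¹ * ∫ r in (0:ℝ)..u, φ r) atTop (𝓝 0) := by
  have hdecay : Tendsto (fun u : ℝ => C / (1 + u) ^ κ) atTop (𝓝 0) :=
    tendsto_const_nhds.div_atTop
      ((tendsto_rpow_atTop hκ).comp (tendsto_atTop_add_const_left _ 1 tendsto_id))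
  refine squeeze_zero_norm' ?_ hdecay
  filter_upwards [eventually_gt_atTop 0] with u hu
  simpa using hrate u hu

theorem abs_integral_comp_div_le {B : ℝ} (hbound : ∀ u ≥ 0, |∫ r in (0:ℝ)..u, φ r| ≤ B * u)
    {ε x : ℝ} (hε : 0 < ε) (hx : 0 ≤ x) :
    |∫ s in (0:ℝ)..x, φ (s / ε)| ≤ B * x := by
  rw [intervalIntegral.integral_comp_div _ hε.ne', smul_eq_mul, abs_mul, abs_of_pos hε,
    zero_div]
  calc ε * |∫ r in (0:ℝ)..x / ε, φ r| ≤ ε * (B * (x / ε)) := by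
        gcongr; exact hbound _ (div_nonneg hx hε.le)
    _ = B * x := by field_simp

theorem tendsto_integral_comp_div_nhdsGT_zero
    (hmean : Tendsto (fun u => u⁻¹ * ∫ r in (0:ℝ)..u, φ r) atTop (𝓝 0)) {x : ℝ} (hx : 0 < x) :
    Tendsto (fun ε => ∫ s in (0:ℝ)..x, φ (s / ε)) (𝓝[>] 0) (𝓝 0) := by
  have hscale : Tendsto (fun ε => x / ε) (𝓝[>] 0) atTop := by
    simpa [div_eq_mul_inv] using tendsto_inv_nhdsGT_zero.const_mul_atTop hx
  have hrewrite : ∀ᶠ ε in 𝓝[>] (0:ℝ), x * ((x / ε)⁻¹ * ∫ r in (0:ℝ)..x / ε, φ r)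
      = ∫ s in (0:ℝ)..x, φ (s / ε) := by
    filter_upwards [self_mem_nhdsWithin] with ε (hε : 0 < ε)
    rw [intervalIntegral.integral_comp_div _ hε.ne', smul_eq_mul, zero_div]
    field_simp
  simpa using ((hmean.comp hscale).const_mul x).congr' hrewrite

theorem tendsto_integral_mul_comp_div_nhdsGT_zero {g : ℝ → ℝ} {B t : ℝ} (ht : 0 < t)
    (hg : AbsolutelyContinuousOnInterval g 0 t) (hφ : LocallyIntegrable φ)
    (hbound : ∀ u ≥ 0, |∫ r in (0:ℝ)..u, φ r| ≤ B * u)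
    (hmean : Tendsto (fun u => u⁻¹ * ∫ r in (0:ℝ)..u, φ r) atTop (𝓝 0)) :
    Tendsto (fun ε => ∫ s in (0:ℝ)..t, g s * φ (s / ε)) (𝓝[>] 0) (𝓝 0) := by
  set H : ℝ → ℝ → ℝ := fun ε x => ∫ s in (0:ℝ)..x, φ (s / ε)
  have hparts : ∀ᶠ ε in 𝓝[>] (0:ℝ), g t * H ε t - ∫ x in (0:ℝ)..t, deriv g x * H ε x
      = ∫ s in (0:ℝ)..t, g s * φ (s / ε) := by
    filter_upwards [self_mem_nhdsWithin] with ε (hε : 0 < ε)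
    exact (hg.integral_mul_eq_sub_integral_deriv_mul_primitive
      (hφ.intervalIntegrable_comp_div hε.ne' 0 t)).symm
  have hboundary : Tendsto (fun ε => g t * H ε t) (𝓝[>] 0) (𝓝 0) := by
    simpa using (tendsto_integral_comp_div_nhdsGT_zero hmean ht).const_mul (g t)
  have hbulk : Tendsto (fun ε => ∫ x in (0:ℝ)..t, deriv g x * H ε x) (𝓝[>] 0) (𝓝 0) := by
    have hdom := intervalIntegral.tendsto_integral_filter_of_dominated_convergence
      (F := fun ε x => deriv g x * H ε x) (f := fun _ => 0) (l := 𝓝[>] (0:ℝ)) (a := 0) (b := t)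
      (μ := volume) (fun x => |deriv g x| * (B * x)) ?_ ?_ ?_ ?_
    · simpa using hdom
    · filter_upwards [self_mem_nhdsWithin] with ε (hε : 0 < ε)
      have hH : Continuous (H ε) :=
        intervalIntegral.continuous_primitive (hφ.intervalIntegrable_comp_div hε.ne') 0
      exact (measurable_deriv g).aestronglyMeasurable.mul hH.aestronglyMeasurable
    · filter_upwards [self_mem_nhdsWithin] with ε (hε : 0 < ε)
      refine ae_of_all _ fun x hx => ?_
      rw [uIoc_of_le ht.le] at hx
      rw [norm_mul, Real.norm_eq_abs, Real.norm_eq_abs]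
      exact mul_le_mul_of_nonneg_left (abs_integral_comp_div_le hbound hε hx.1.le) (abs_nonneg _)
    · exact hg.intervalIntegrable_deriv.abs.mul_continuousOn (by fun_prop)
    · refine ae_of_all _ fun x hx => ?_
      rw [uIoc_of_le ht.le] at hx
      simpa using (tendsto_integral_comp_div_nhdsGT_zero hmean hx.1).const_mul (deriv g x)
  simpa using (hboundary.sub hbulk).congr' hparts

end

theorem limit_of_mean_measure_general
    (lam : ℝ → ℝ)
    (Fbar : ℝ → ℝ → ℝ)
    (ψ Z : ℝ → ℝ)
    (hloc : LocallyIntegrable (fun u => ψ (Z u)) volume)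
    (ψbar C κ : ℝ) (hκ : 0 < κ)
    (herg : ∀ u > (0:ℝ),
      |(1 / u) * ∫ r in (0:ℝ)..u, ψ (Z r) - ψbar| ≤ C / (1 + u) ^ κ)
    (t : ℝ) (ht : 0 < t)
    (hg : ContDiffOn ℝ 1 (fun s => lam s * Fbar s (t - s)) (Set.Icc 0 t)) :
    Tendsto (fun ε : ℝ =>
        ∫ s in (0:ℝ)..t, lam s * Fbar s (t - s) * ψ (Z (s / ε)))
      (nhdsWithin 0 (Set.Ioi 0))
      (nhds (ψbar * ∫ s in (0:ℝ)..t, lam s * Fbar s (t - s))) := by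
  set g := fun s => lam s * Fbar s (t - s)
  have hgac : AbsolutelyContinuousOnInterval g 0 t :=
    ContDiffOn.absolutelyContinuousOnInterval (by rwa [uIcc_of_le ht.le])
  have hcentered := tendsto_integral_mul_comp_div_nhdsGT_zero ht hgac
    (hloc.sub (locallyIntegrable_const ψbar))
    (abs_integral_le_mul_of_abs_average_le_rpow hκ.le herg)
    (tendsto_average_of_abs_average_le_rpow hκ herg)
  have hsplit : ∀ᶠ ε in 𝓝[>] (0:ℝ),
      (∫ s in (0:ℝ)..t, g s * (ψ (Z (s / ε)) - ψbar)) + ψbar * ∫ s in (0:ℝ)..t, g s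
        = ∫ s in (0:ℝ)..t, g s * ψ (Z (s / ε)) := by
    filter_upwards [self_mem_nhdsWithin] with ε (hε : 0 < ε)
    have hgψ : IntervalIntegrable (fun s => g s * ψ (Z (s / ε))) volume 0 t :=
      (hloc.intervalIntegrable_comp_div hε.ne' 0 t).continuousOn_mul hgac.continuousOn
    have hgψbar : IntervalIntegrable (fun s => g s * ψbar) volume 0 t :=
      hgac.continuousOn.intervalIntegrable.mul_const ψbar
    simp_rw [mul_sub]
    rw [intervalIntegral.integral_sub hgψ hgψbar, intervalIntegral.integral_mul_const]
    ring
  simpa using (hcentered.add_const (ψbar * ∫ s in (0:ℝ)..t, g s)).congr' hsplit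

/-- Theorem 3.2 of the paper: convergence of the quenched mean
`m^ε(t) = ∫₀ᵗ λ(s) F̄_s(t-s) ψ(Z_{s/ε}) ds` to `ψ̄ ∫₀ᵗ λ(s) F̄_s(t-s) ds`. -/
theorem limit_of_mean_measure
    (lam : ℝ → ℝ) (hlam_cont : Continuous lam) (hlam_nonneg : ∀ s, 0 ≤ lam s)
    (K : ℝ) (hlam_bdd : ∀ s, lam s ≤ K)
    (Fbar : ℝ → ℝ → ℝ)
    (ψ Z : ℝ → ℝ) (hψ : Measurable ψ) (hψ_nonneg : ∀ x, 0 ≤ ψ x)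
    (hZ : Measurable Z)
    (hloc : LocallyIntegrable (fun u => ψ (Z u)) volume)
    (ψbar C κ : ℝ) (hκ : 0 < κ) (hC : 0 < C)
    (herg : ∀ u > (0:ℝ),
      |(1 / u) * ∫ r in (0:ℝ)..u, ψ (Z r) - ψbar| ≤ C / (1 + u) ^ κ)
    (t : ℝ) (ht : 0 < t)
    (hg : ContDiffOn ℝ 1 (fun s => lam s * Fbar s (t - s)) (Set.Icc 0 t)) :
    Tendsto (fun ε : ℝ =>
        ∫ s in (0:ℝ)..t, lam s * Fbar s (t - s) * ψ (Z (s / ε)))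
      (nhdsWithin 0 (Set.Ioi 0))
      (nhds (ψbar * ∫ s in (0:ℝ)..t, lam s * Fbar s (t - s))) :=
  limit_of_mean_measure_general lam Fbar ψ Z hloc ψbar C κ hκ herg t ht hg
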